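/- Case (VI)(i): Let η be a character of Γ with η|_Λ = ξ and let c ∈ ℂ, c ≠ 0. The operators on L(η, c) defined by ρ(h)·f_i = η(h)·χ₁(h)^i·f_i, X·f_i = f_{i+1}, Y·f_i = c_i·f_{i−1} (indices modulo r) form a case-VI representation if and only if c₀·c₁·⋯·c_{r−1} = 1; and when this holds, (L(η, c), ρ, X, Y) is irreducible. -/

import Mathlib

noncomputable section

/-- `(V, ρ, X, Y)` is a representation of the common part of the rank-2 algebra `A(ξ)`:
`ρ` is a group homomorphism (recorded via multiplicativity and unitality),
`ρ(h)∘X = χ₁(h)·(X∘ρ(h))` and `ρ(h)∘Y = χ₂(h)·(Y∘ρ(h))` for all `h ∈ Γ`, and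
`ρ(g) = ξ(g)·id` for all `g ∈ Λ`. -/
def IsRep {Γ : Type*} [CommGroup Γ] (χ₁ χ₂ : Γ →* ℂˣ) (Λ : Subgroup Γ) (ξ : ↥Λ →* ℂˣ)
    {V : Type*} [AddCommGroup V] [Module ℂ V]
    (ρ : Γ → Module.End ℂ V) (X Y : Module.End ℂ V) : Prop :=
  (∀ a b : Γ, ρ (a * b) = ρ a * ρ b) ∧ ρ 1 = 1 ∧
  (∀ h : Γ, ρ h * X = (χ₁ h : ℂ) • (X * ρ h)) ∧
  (∀ h : Γ, ρ h * Y = (χ₂ h : ℂ) • (Y * ρ h)) ∧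
  ∀ g : Λ, ρ (g : Γ) = (ξ g : ℂ) • (1 : Module.End ℂ V)

/-- A subspace `W` is stable under `X`, `Y` and all `ρ(h)`. -/
def Stable2 {Γ : Type*} {V : Type*} [AddCommGroup V] [Module ℂ V]
    (ρ : Γ → Module.End ℂ V) (X Y : Module.End ℂ V) (W : Submodule ℂ V) : Prop :=
  (∀ v ∈ W, X v ∈ W) ∧ (∀ v ∈ W, Y v ∈ W) ∧ ∀ h : Γ, ∀ v ∈ W, ρ h v ∈ W

/-- Irreducibility: `V ≠ 0` and the only subspaces stable under `X`, `Y` and all `ρ(h)`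
are `0` and `V`. -/
def Irred2 {Γ : Type*} {V : Type*} [AddCommGroup V] [Module ℂ V]
    (ρ : Γ → Module.End ℂ V) (X Y : Module.End ℂ V) : Prop :=
  (∃ v : V, v ≠ 0) ∧ ∀ W : Submodule ℂ V, Stable2 ρ X Y W → W = ⊥ ∨ W = ⊤

/-- The sequence `c_i` defined by `c₀ = c` and
`c_i = q·(c_{i−1} + ν − ν·q^{2(i−1)}·γ)` for `i ≥ 1`. -/
def cseq (q ν γ c : ℂ) : ℕ → ℂ
  | 0 => c
  | i + 1 => q * (cseq q ν γ c i + ν - ν * q ^ (2 * i) * γ)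

/-- `(V, ρ, X, Y)` is a case-VI representation: a representation with in addition
`X^r = id`, `Y^r = id` and `X∘Y = q⁻¹·(Y∘X) + ν·(ρ(g₁g₂) − id)`, where `q = χ₁(g₁)`. -/
def IsRepVI {Γ : Type*} [CommGroup Γ] (g₁ g₂ : Γ) (χ₁ χ₂ : Γ →* ℂˣ) (ν : ℂ)
    (Λ : Subgroup Γ) (ξ : ↥Λ →* ℂˣ) (r : ℕ)
    {V : Type*} [AddCommGroup V] [Module ℂ V]
    (ρ : Γ → Module.End ℂ V) (X Y : Module.End ℂ V) : Prop :=
  IsRep χ₁ χ₂ Λ ξ ρ X Y ∧ X ^ r = 1 ∧ Y ^ r = 1 ∧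
    X * Y = (((χ₁ g₁ : ℂˣ) : ℂ))⁻¹ • (Y * X) + ν • (ρ (g₁ * g₂) - 1)

/-- The action of `h ∈ Γ` on `L(η, c)`, with `ρ(h)·f_i = η(h)·χ₁(h)^i·f_i` on the basis
`(f_i)_{i ∈ ℤ/rℤ}` of `ℤ/rℤ → ℂ`. -/
def wRho (r : ℕ) {Γ : Type*} [CommGroup Γ] (χ₁ η : Γ →* ℂˣ) (h : Γ) :
    Module.End ℂ (ZMod r → ℂ) where
  toFun v := fun i => (η h : ℂ) * (χ₁ h : ℂ) ^ i.val * v i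
  map_add' v w := by funext i; simp [mul_add]
  map_smul' a v := by funext i; simp [smul_eq_mul]; ring

/-- The operator `X` on `L(η, c)`, with `X·f_i = f_{i+1}` (indices modulo `r`). -/
def wX (r : ℕ) : Module.End ℂ (ZMod r → ℂ) where
  toFun v := fun i => v (i - 1)
  map_add' _ _ := rfl
  map_smul' _ _ := rfl

/-- The operator `Y` on `L(η, c)`, with `Y·f_i = c_i·f_{i−1}` (indices modulo `r`,
the index of `c` being read off via the canonical representative in `{0, …, r−1}`). -/
def wY (r : ℕ) (cs : ℕ → ℂ) : Module.End ℂ (ZMod r → ℂ) where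
  toFun v := fun j => cs ((j + 1 : ZMod r).val) * v (j + 1)
  map_add' v w := by funext j; simp [mul_add]
  map_smul' a v := by funext j; simp [smul_eq_mul]; ring

/-!
The sequence has the closed form `c_n = qⁿ c + ν (q - γ qⁿ)(1 + q + ⋯ + qⁿ⁻¹)`, which depends
only on `qⁿ`; since `q` is a primitive `r`-th root of unity, `c` is `r`-periodic. With this, every
defining relation except `Y^r = 1` holds on `L(η, c)` identically, while `Y^r` is the scalar
`c₀ c₁ ⋯ c_{r-1}`. Irreducibility needs only `ρ(g₁)` and `X`: `ρ(g₁)` is diagonal with the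
distinct eigenvalues `η(g₁) qⁱ`, so a nonzero stable subspace contains some `f_i`, hence all
`Xᵏ f_i = f_{i+k}`.
-/

open Finset Function

lemma cseq_eq_geom_sum (q ν γ c : ℂ) (n : ℕ) :
    cseq q ν γ c n = q ^ n * c + ν * (q - γ * q ^ n) * ∑ k ∈ range n, q ^ k := by
  induction n with
  | zero => simp [cseq]
  | succ n ih =>
    have hgeom : q * ∑ k ∈ range n, q ^ k + 1 = ∑ k ∈ range n, q ^ k + q ^ n := by
      rw [← geom_sum_succ, geom_sum_succ']
      ring
    rw [cseq, ih, geom_sum_succ]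
    linear_combination ν * γ * q ^ (n + 1) * hgeom

lemma cseq_mod {q : ℂ} {r : ℕ} (hq : IsPrimitiveRoot q r) (hr : 1 < r) (ν γ c : ℂ) (n : ℕ) :
    cseq q ν γ c (n % r) = cseq q ν γ c n := by
  have hq1 : q ≠ 1 := hq.ne_one hr
  rw [cseq_eq_geom_sum, cseq_eq_geom_sum, geom_sum_eq hq1, geom_sum_eq hq1,
    ← pow_eq_pow_mod n hq.pow_eq_one]

lemma pow_val_add_one {M : Type*} [Monoid M] {r : ℕ} [Fact (1 < r)] {u : M} (hu : u ^ r = 1)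
    (i : ZMod r) : u ^ (i + 1).val = u * u ^ i.val := by
  rw [ZMod.val_add, ZMod.val_one, ← pow_eq_pow_mod _ hu, pow_succ']

lemma prod_range_natCast_zmod {M : Type*} [CommMonoid M] {r : ℕ} [NeZero r] (f : ZMod r → M) :
    ∏ t ∈ range r, f t = ∏ x, f x :=
  prod_nbij' (fun t => (t : ZMod r)) ZMod.val (fun _ _ => mem_univ _)
    (fun x _ => mem_range.2 x.val_lt) (fun _ ht => ZMod.val_cast_of_lt (mem_range.1 ht))
    (fun x _ => ZMod.natCast_zmod_val x) (fun _ _ => rfl)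

section Operators

variable {r : ℕ}

@[simp]
lemma wX_apply (v : ZMod r → ℂ) (i : ZMod r) : wX r v i = v (i - 1) := rfl

@[simp]
lemma wY_apply (cs : ℕ → ℂ) (v : ZMod r → ℂ) (j : ZMod r) :
    wY r cs v j = cs (j + 1).val * v (j + 1) := rfl

@[simp]
lemma wRho_apply {Γ : Type*} [CommGroup Γ] (χ₁ η : Γ →* ℂˣ) (h : Γ) (v : ZMod r → ℂ)
    (i : ZMod r) : wRho r χ₁ η h v i = (η h : ℂ) * (χ₁ h : ℂ) ^ i.val * v i := rfl

lemma wX_pow_apply (n : ℕ) (v : ZMod r → ℂ) (i : ZMod r) : (wX r ^ n) v i = v (i - n) := by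
  induction n generalizing v i with
  | zero => simp
  | succ n ih =>
    rw [pow_succ, Module.End.mul_apply, ih, wX_apply]
    push_cast
    ring_nf

lemma wX_pow_single (n : ℕ) (i : ZMod r) (a : ℂ) :
    (wX r ^ n) (Pi.single i a) = Pi.single (i + n) a := by
  ext k
  simp [wX_pow_apply, Pi.single_apply, sub_eq_iff_eq_add]

lemma wX_pow_self : wX r ^ r = 1 := by
  ext v i
  simp [wX_pow_apply]

lemma wY_pow_apply (cs : ℕ → ℂ) (n : ℕ) (v : ZMod r → ℂ) (j : ZMod r) :
    (wY r cs ^ n) v j = (∏ t ∈ range n, cs (j + 1 + t).val) * v (j + n) := by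
  induction n generalizing v j with
  | zero => simp
  | succ n ih =>
    rw [pow_succ, Module.End.mul_apply, ih, wY_apply, prod_range_succ]
    push_cast
    ring_nf

lemma wY_pow_self [NeZero r] (cs : ℕ → ℂ) : wY r cs ^ r = (∏ i ∈ range r, cs i) • 1 := by
  ext v j
  have hprod : ∏ t ∈ range r, cs (j + 1 + t).val = ∏ i ∈ range r, cs i := calc
    _ = ∏ x, cs (j + 1 + x).val := prod_range_natCast_zmod fun x => cs (j + 1 + x).val
    _ = ∏ x : ZMod r, cs x.val := Fintype.prod_equiv (Equiv.addLeft (j + 1)) _ _ fun _ => rfl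
    _ = ∏ t ∈ range r, cs (t : ZMod r).val := (prod_range_natCast_zmod fun x => cs x.val).symm
    _ = ∏ i ∈ range r, cs i :=
      prod_congr rfl fun t ht => by rw [ZMod.val_cast_of_lt (mem_range.1 ht)]
  simp [wY_pow_apply, hprod]

lemma wY_pow_self_eq_one_iff [NeZero r] (cs : ℕ → ℂ) :
    wY r cs ^ r = 1 ↔ ∏ i ∈ range r, cs i = 1 := by
  rw [wY_pow_self]
  have : (1 : Module.End ℂ (ZMod r → ℂ)) ≠ 0 := one_ne_zero
  exact ⟨fun h => smul_left_injective ℂ this (by simpa using h), fun h => by simp [h]⟩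

variable {Γ : Type*} [CommGroup Γ] (χ₁ η : Γ →* ℂˣ)

lemma wRho_mul (a b : Γ) : wRho r χ₁ η (a * b) = wRho r χ₁ η a * wRho r χ₁ η b := by
  ext v i
  simp only [wRho_apply, Module.End.mul_apply, map_mul, Units.val_mul, mul_pow]
  ring

lemma wRho_one : wRho r χ₁ η 1 = 1 := by
  ext v i
  simp

lemma wRho_eq_smul_one {g : Γ} (hg : χ₁ g = 1) : wRho r χ₁ η g = (η g : ℂ) • 1 := by
  ext v i
  simp [hg]

variable [Fact (1 < r)] {h : Γ}

lemma wRho_mul_wX (hh : χ₁ h ^ r = 1) :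
    wRho r χ₁ η h * wX r = (χ₁ h : ℂ) • (wX r * wRho r χ₁ η h) := by
  refine LinearMap.ext fun v => funext fun i => ?_
  have hpow := congrArg Units.val (pow_val_add_one hh (i - 1))
  rw [sub_add_cancel] at hpow
  push_cast at hpow
  simp only [Module.End.mul_apply, LinearMap.smul_apply, Pi.smul_apply, wRho_apply, wX_apply,
    smul_eq_mul, hpow]
  ring

lemma wRho_mul_wY (hh : χ₁ h ^ r = 1) (cs : ℕ → ℂ) :
    wRho r χ₁ η h * wY r cs = (((χ₁ h)⁻¹ : ℂˣ) : ℂ) • (wY r cs * wRho r χ₁ η h) := by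
  refine LinearMap.ext fun v => funext fun j => ?_
  have hpow := congrArg Units.val (pow_val_add_one hh j)
  push_cast at hpow
  simp only [Module.End.mul_apply, LinearMap.smul_apply, Pi.smul_apply, wRho_apply, wY_apply,
    smul_eq_mul, hpow]
  linear_combination
    -(η h : ℂ) * (χ₁ h : ℂ) ^ j.val * cs (j + 1).val * v (j + 1) * Units.inv_mul (χ₁ h)

lemma wX_mul_wY_cseq {q : ℂ} (hq : IsPrimitiveRoot q r) {g : Γ} (hg : (χ₁ g : ℂ) = q ^ 2)
    (ν c : ℂ) :
    wX r * wY r (cseq q ν (η g) c) =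
      q⁻¹ • (wY r (cseq q ν (η g) c) * wX r) + ν • (wRho r χ₁ η g - 1) := by
  refine LinearMap.ext fun v => funext fun i => ?_
  have hnext : cseq q ν (η g) c (i + 1).val = cseq q ν (η g) c (i.val + 1) := by
    rw [ZMod.val_add, ZMod.val_one, cseq_mod hq Fact.out]
  have hq0 : q ≠ 0 := hq.ne_zero (NeZero.ne r)
  simp only [Module.End.mul_apply, LinearMap.add_apply, LinearMap.smul_apply,
    LinearMap.sub_apply, Module.End.one_apply, Pi.add_apply, Pi.smul_apply, Pi.sub_apply,
    smul_eq_mul, wX_apply, wY_apply, wRho_apply, sub_add_cancel, add_sub_cancel_right, hnext,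
    cseq, hg, ← pow_mul]
  field_simp
  ring

end Operators

lemma single_mem_of_diagonal_stable {ι K : Type*} [Fintype ι] [DecidableEq ι] [Field K]
    {d : ι → K} (hd : Injective d) {W : Submodule K (ι → K)}
    (hW : ∀ v ∈ W, (fun k => d k * v k) ∈ W) {w : ι → K} (hw : w ∈ W) {i : ι}
    (hwi : w i ≠ 0) : Pi.single i 1 ∈ W := by
  -- `∏_{j ∈ s} (D - d j)` is a polynomial in the diagonal operator `D`, so it preserves `W`.
  have hkill : ∀ s : Finset ι, (fun k => (∏ j ∈ s, (d k - d j)) * w k) ∈ W := by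
    intro s
    induction s using Finset.induction_on with
    | empty => simpa using hw
    | insert a s ha ih =>
      convert W.sub_mem (hW _ ih) (W.smul_mem (d a) ih) using 1
      funext k
      simp only [prod_insert ha, Pi.sub_apply, Pi.smul_apply, smul_eq_mul]
      ring
  have hne : (∏ j ∈ univ.erase i, (d i - d j)) * w i ≠ 0 :=
    mul_ne_zero (prod_ne_zero_iff.2 fun j hj => sub_ne_zero.2 (hd.ne (ne_of_mem_erase hj).symm))
      hwi
  convert W.smul_mem ((∏ j ∈ univ.erase i, (d i - d j)) * w i)⁻¹ (hkill (univ.erase i)) using 1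
  funext k
  rcases eq_or_ne k i with rfl | hk
  · rw [Pi.single_eq_same, Pi.smul_apply, smul_eq_mul, inv_mul_cancel₀ hne]
  · rw [Pi.single_eq_of_ne hk, Pi.smul_apply, smul_eq_mul,
      prod_eq_zero (f := fun j => d k - d j) (mem_erase.2 ⟨hk, mem_univ k⟩) (sub_self _),
      zero_mul, mul_zero]

lemma eq_top_of_single_mem_of_wX_stable {r : ℕ} [NeZero r] {W : Submodule ℂ (ZMod r → ℂ)}
    (hX : ∀ v ∈ W, wX r v ∈ W) {i : ZMod r} (hi : Pi.single i 1 ∈ W) : W = ⊤ := by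
  have hsingle : ∀ j : ZMod r, Pi.single j 1 ∈ W := fun j => by
    have := Module.End.pow_apply_mem_of_forall_mem (j - i).val hX _ hi
    rwa [wX_pow_single, ZMod.natCast_zmod_val, add_sub_cancel] at this
  rw [eq_top_iff, ← (Pi.basisFun ℂ (ZMod r)).span_eq, Submodule.span_le]
  rintro _ ⟨j, rfl⟩
  simpa using hsingle j

lemma irred2_wRho_wX {Γ : Type*} [CommGroup Γ] {χ₁ η : Γ →* ℂˣ} {r : ℕ} [NeZero r] {g : Γ}
    (hq : IsPrimitiveRoot (χ₁ g : ℂ) r) (Y : Module.End ℂ (ZMod r → ℂ)) :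
    Irred2 (wRho r χ₁ η) (wX r) Y := by
  refine ⟨exists_ne 0, fun W hW => or_iff_not_imp_left.2 fun hW0 => ?_⟩
  obtain ⟨w, hw, hw0⟩ := W.exists_mem_ne_zero_of_ne_bot hW0
  obtain ⟨i, hi⟩ := Function.ne_iff.1 hw0
  have hd : Injective fun k : ZMod r => (η g : ℂ) * (χ₁ g : ℂ) ^ k.val := fun a b hab =>
    ZMod.val_injective r (hq.pow_inj a.val_lt b.val_lt (mul_left_cancel₀ (Units.ne_zero _) hab))
  exact eq_top_of_single_mem_of_wX_stable hW.1 (single_mem_of_diagonal_stable hd (hW.2.2 g) hw hi)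

theorem caseVI_construction_general {Γ : Type*} [CommGroup Γ] (g₁ g₂ : Γ)
    (χ₁ χ₂ : Γ →* ℂˣ) (hχ₂ : χ₂ = χ₁⁻¹) (h12 : χ₁ g₂ * χ₂ g₁ = 1)
    (r : ℕ) (hr : 1 < r) (hord : orderOf χ₁ = r)
    (hq : IsPrimitiveRoot ((χ₁ g₁ : ℂˣ) : ℂ) r)
    (ν : ℂ)
    (Λ : Subgroup Γ) (hΛ : ∀ g : Γ, g ∈ Λ ↔ (χ₁ g = 1 ∧ χ₂ g = 1)) (ξ : ↥Λ →* ℂˣ)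
    (η : Γ →* ℂˣ) (hη : ∀ g : Λ, η (g : Γ) = ξ g) (c : ℂ) :
    (IsRepVI g₁ g₂ χ₁ χ₂ ν Λ ξ r (wRho r χ₁ η) (wX r)
        (wY r (cseq ((χ₁ g₁ : ℂˣ) : ℂ) ν ((η (g₁ * g₂) : ℂˣ) : ℂ) c)) ↔
      ∏ i ∈ Finset.range r, cseq ((χ₁ g₁ : ℂˣ) : ℂ) ν ((η (g₁ * g₂) : ℂˣ) : ℂ) c i = 1) ∧
    ((∏ i ∈ Finset.range r, cseq ((χ₁ g₁ : ℂˣ) : ℂ) ν ((η (g₁ * g₂) : ℂˣ) : ℂ) c i = 1) →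
      Irred2 (wRho r χ₁ η) (wX r)
        (wY r (cseq ((χ₁ g₁ : ℂˣ) : ℂ) ν ((η (g₁ * g₂) : ℂˣ) : ℂ) c))) := by
  have : Fact (1 < r) := ⟨hr⟩
  subst hχ₂
  have hχr : ∀ h, χ₁ h ^ r = 1 := fun h => by
    rw [← MonoidHom.pow_apply, ← hord, pow_orderOf_eq_one, MonoidHom.one_apply]
  have hg : (χ₁ (g₁ * g₂) : ℂ) = (χ₁ g₁ : ℂ) ^ 2 := by
    rw [MonoidHom.inv_apply, mul_inv_eq_one] at h12
    rw [map_mul, h12, Units.val_mul, sq]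
  refine ⟨⟨fun hrep => (wY_pow_self_eq_one_iff _).1 hrep.2.2.1, fun hprod => ?_⟩,
    fun _ => irred2_wRho_wX hq _⟩
  refine ⟨⟨wRho_mul χ₁ η, wRho_one χ₁ η, fun h => wRho_mul_wX χ₁ η (hχr h),
    fun h => wRho_mul_wY χ₁ η (hχr h) _, fun g => ?_⟩, wX_pow_self,
    (wY_pow_self_eq_one_iff _).2 hprod, wX_mul_wY_cseq χ₁ η hq hg ν c⟩
  rw [wRho_eq_smul_one χ₁ η ((hΛ g).1 g.2).1, hη]

/-- Case (VI)(i): for a character `η` of `Γ` with `η|_Λ = ξ` and `c ≠ 0`, the operators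
`ρ(h)·f_i = η(h)·χ₁(h)^i·f_i`, `X·f_i = f_{i+1}`, `Y·f_i = c_i·f_{i−1}` on `L(η, c)`
form a case-VI representation if and only if `c₀·c₁·⋯·c_{r−1} = 1`; and when this holds,
the representation is irreducible. Here `c_i = cseq q ν (η(g₁g₂)) c i`. -/
theorem caseVI_construction {Γ : Type*} [CommGroup Γ] [Fintype Γ] (g₁ g₂ : Γ)
    (χ₁ χ₂ : Γ →* ℂˣ) (hχ₂ : χ₂ = χ₁⁻¹) (h12 : χ₁ g₂ * χ₂ g₁ = 1)
    (r : ℕ) (hr : 1 < r) (hord : orderOf χ₁ = r)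
    (hq : IsPrimitiveRoot ((χ₁ g₁ : ℂˣ) : ℂ) r)
    (ν : ℂ) (hν : ν ≠ 0)
    (Λ : Subgroup Γ) (hΛ : ∀ g : Γ, g ∈ Λ ↔ (χ₁ g = 1 ∧ χ₂ g = 1)) (ξ : ↥Λ →* ℂˣ)
    (η : Γ →* ℂˣ) (hη : ∀ g : Λ, η (g : Γ) = ξ g) (c : ℂ) (hc : c ≠ 0) :
    (IsRepVI g₁ g₂ χ₁ χ₂ ν Λ ξ r (wRho r χ₁ η) (wX r)
        (wY r (cseq ((χ₁ g₁ : ℂˣ) : ℂ) ν ((η (g₁ * g₂) : ℂˣ) : ℂ) c)) ↔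
      ∏ i ∈ Finset.range r, cseq ((χ₁ g₁ : ℂˣ) : ℂ) ν ((η (g₁ * g₂) : ℂˣ) : ℂ) c i = 1) ∧
    ((∏ i ∈ Finset.range r, cseq ((χ₁ g₁ : ℂˣ) : ℂ) ν ((η (g₁ * g₂) : ℂˣ) : ℂ) c i = 1) →
      Irred2 (wRho r χ₁ η) (wX r)
        (wY r (cseq ((χ₁ g₁ : ℂˣ) : ℂ) ν ((η (g₁ * g₂) : ℂˣ) : ℂ) c))) :=
  caseVI_construction_general g₁ g₂ χ₁ χ₂ hχ₂ h12 r hr hord hq ν Λ hΛ ξ η hη c
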